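/- The A₊-module A₋ of odd continuous functions on S² is finitely generated projective: it is generated by the three coordinate functions x₁, x₂, x₃, and is isomorphic to the image of the idempotent p̃ ∈ M₃(A₊) given by p̃ᵢⱼ = xᵢxⱼ acting on A₊³. -/

import Mathlib

/-!
Since x₁² + x₂² + x₃² = 1 on S², every f decomposes as f = ∑ xᵢ (xᵢ f), and for odd f the
coefficients xᵢ f are even. Hence f ↦ (xᵢ f)ᵢ and v ↦ ∑ xⱼ vⱼ are mutually inverse between A₋
and the vectors of even functions fixed by p̃ = x xᵀ, because (p̃ v)ᵢ = xᵢ ∑ⱼ xⱼ vⱼ.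
-/

noncomputable section

abbrev S2 := Metric.sphere (0 : EuclideanSpace ℝ (Fin 3)) 1

def negS (x : S2) : S2 :=
  ⟨-(x : EuclideanSpace ℝ (Fin 3)), by
    have hx : ‖(x : EuclideanSpace ℝ (Fin 3))‖ = 1 := mem_sphere_zero_iff_norm.mp x.2
    simp [mem_sphere_zero_iff_norm, hx]⟩

def Aminus : Set (S2 → ℂ) := {f | Continuous f ∧ ∀ x, f (negS x) = -f x}

/-- The image p̃(A₊³) of the idempotent p̃ᵢⱼ = xᵢxⱼ acting on triples of even functions. -/
def pA3 : Set (S2 → Fin 3 → ℂ) :=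
  {v | Continuous v ∧ (∀ x, v (negS x) = v x) ∧
    (∀ x i, (∑ j, (((x.1 i * x.1 j : ℝ) : ℂ)) * v x j) = v x i)}

def T : (S2 → ℂ) → (S2 → Fin 3 → ℂ) :=
  fun f x i => f x * ((x.1 i : ℝ) : ℂ)

lemma EuclideanSpace.sum_ofReal_mul_self_eq_one {ι : Type*} [Fintype ι]
    {x : EuclideanSpace ℝ ι} (hx : ‖x‖ = 1) : ∑ i, ((x i : ℝ) : ℂ) * ((x i : ℝ) : ℂ) = 1 := by
  have h := EuclideanSpace.real_norm_sq_eq x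
  rw [hx, one_pow] at h
  exact_mod_cast (by simpa only [sq] using h.symm)

namespace S2

lemma continuous_coord (i : Fin 3) : Continuous fun x : S2 => ((x.1 i : ℝ) : ℂ) := by
  fun_prop

lemma coord_negS (x : S2) (i : Fin 3) : (negS x).1 i = -x.1 i := rfl

lemma sum_coord_mul_self (x : S2) : ∑ i, ((x.1 i : ℝ) : ℂ) * ((x.1 i : ℝ) : ℂ) = 1 :=
  EuclideanSpace.sum_ofReal_mul_self_eq_one (mem_sphere_zero_iff_norm.mp x.2)

end S2

def contract (v : S2 → Fin 3 → ℂ) : S2 → ℂ :=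
  fun x => ∑ j, ((x.1 j : ℝ) : ℂ) * v x j

lemma contract_T (f : S2 → ℂ) : contract (T f) = f := by
  funext x
  calc contract (T f) x = f x * ∑ j, ((x.1 j : ℝ) : ℂ) * ((x.1 j : ℝ) : ℂ) := by
        simp only [contract, T, Finset.mul_sum]
        exact Finset.sum_congr rfl fun j _ => by ring
    _ = f x := by rw [S2.sum_coord_mul_self, mul_one]

lemma T_contract {v : S2 → Fin 3 → ℂ}
    (hv : ∀ x i, ∑ j, ((x.1 i * x.1 j : ℝ) : ℂ) * v x j = v x i) : T (contract v) = v := by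
  funext x i
  rw [← hv x i]
  simp only [T, contract, Finset.sum_mul]
  exact Finset.sum_congr rfl fun j _ => by push_cast; ring

lemma T_mem_pA3 {f : S2 → ℂ} (hf : f ∈ Aminus) : T f ∈ pA3 := by
  obtain ⟨hf_cont, hf_odd⟩ := hf
  refine ⟨continuous_pi fun i => hf_cont.mul (S2.continuous_coord i), fun x => ?_, fun x i => ?_⟩
  · funext i
    simp only [T, hf_odd, S2.coord_negS]
    push_cast
    ring
  · calc ∑ j, ((x.1 i * x.1 j : ℝ) : ℂ) * T f x j
          = T f x i * ∑ j, ((x.1 j : ℝ) : ℂ) * ((x.1 j : ℝ) : ℂ) := by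
            simp only [T, Finset.mul_sum]
            exact Finset.sum_congr rfl fun j _ => by push_cast; ring
      _ = T f x i := by rw [S2.sum_coord_mul_self, mul_one]

lemma contract_mem_Aminus {v : S2 → Fin 3 → ℂ} (hv_cont : Continuous v)
    (hv_even : ∀ x, v (negS x) = v x) : contract v ∈ Aminus := by
  refine ⟨continuous_finsetSum _ fun j _ =>
    (S2.continuous_coord j).mul ((continuous_apply j).comp hv_cont), fun x => ?_⟩
  simp only [contract, hv_even, S2.coord_negS, ← Finset.sum_neg_distrib]
  exact Finset.sum_congr rfl fun j _ => by push_cast; ring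

/-- A₋ is a finitely generated projective A₊-module: it is generated by the three
coordinate functions, and T identifies it with the image of the idempotent p̃ on A₊³. -/
theorem stmt6 :
    (∀ f ∈ Aminus, ∃ g : Fin 3 → S2 → ℂ,
      (∀ i, Continuous (g i) ∧ ∀ x, g i (negS x) = g i x) ∧
      (∀ x, f x = ∑ i, ((x.1 i : ℝ) : ℂ) * g i x)) ∧
    (∀ f ∈ Aminus, T f ∈ pA3) ∧
    Set.BijOn T Aminus pA3 := by
  refine ⟨fun f hf => ?_, fun f => T_mem_pA3, ?_⟩
  · obtain ⟨hTf_cont, hTf_even, -⟩ := T_mem_pA3 hf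
    exact ⟨fun i x => T f x i,
      fun i => ⟨(continuous_apply i).comp hTf_cont, fun x => congrFun (hTf_even x) i⟩,
      fun x => (congrFun (contract_T f) x).symm⟩
  · exact Set.InvOn.bijOn ⟨fun f _ => contract_T f, fun v hv => T_contract hv.2.2⟩
      (fun f => T_mem_pA3) (fun v hv => contract_mem_Aminus hv.1 hv.2.1)
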